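/- Let G₁ be a finite connected graph that is not complete and let G₂ be a finite graph with at least one vertex. If k₁(G₁) = κ(G₁), i.e., some minimum vertex-cut of G₁ is also a k₁-vertex-cut, then k₁(G₁∘G₂) = κ(G₁∘G₂). -/

import Mathlib

/-- The lexicographic product of two simple graphs: `(x₁,y₁)` is adjacent to `(x₂,y₂)`
iff `x₁x₂` is an edge of `G`, or `x₁ = x₂` and `y₁y₂` is an edge of `H`. -/
def lexProd {V W : Type*} (G : SimpleGraph V) (H : SimpleGraph W) :
    SimpleGraph (V × W) where
  Adj p q := G.Adj p.1 q.1 ∨ (p.1 = q.1 ∧ H.Adj p.2 q.2)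
  symm := by
    constructor
    rintro ⟨x₁, y₁⟩ ⟨x₂, y₂⟩ (h | ⟨rfl, h⟩)
    · exact Or.inl h.symm
    · exact Or.inr ⟨rfl, h.symm⟩
  loopless := by
    constructor
    rintro ⟨x, y⟩ (h | ⟨-, h⟩)
    · exact G.irrefl h
    · exact H.irrefl h

/-- The set `V₀(G)` of isolated vertices of `G`. -/
def isoSet {V : Type*} (G : SimpleGraph V) : Set V := {v | ∀ w, ¬ G.Adj v w}

/-- The set of vertices of `G − S` that are isolated in `G − S`,
i.e. `V₀(G − S)` regarded as a subset of the vertices of `G`. -/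
def isolatedAfter {V : Type*} (G : SimpleGraph V) (S : Set V) : Set V :=
  {v | v ∉ S ∧ ∀ w ∉ S, ¬ G.Adj v w}

/-- `S` is a vertex-cut of `G`: deleting `S` leaves a disconnected graph, or reduces `G`
to the trivial one-vertex graph `K₁`. -/
def IsVertexCut {V : Type*} (G : SimpleGraph V) (S : Set V) : Prop :=
  (Sᶜ.Nonempty ∧ ¬ (G.induce Sᶜ).Connected) ∨ (∃ v, Sᶜ = {v})

/-- The connectivity `κ(G)`: the minimum cardinality of a vertex-cut of `G`. -/
noncomputable def graphConnectivity {V : Type*} (G : SimpleGraph V) : ℕ :=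
  sInf {n | ∃ S : Set V, IsVertexCut G S ∧ S.ncard = n}

/-- A minimum vertex-cut: a vertex-cut of cardinality `κ(G)`. -/
def IsMinVertexCut {V : Type*} (G : SimpleGraph V) (S : Set V) : Prop :=
  IsVertexCut G S ∧ S.ncard = graphConnectivity G

/-- A k₁-vertex-cut: a vertex-cut `S` such that `G − S` has no isolated vertices. -/
def IsK1VertexCut {V : Type*} (G : SimpleGraph V) (S : Set V) : Prop :=
  IsVertexCut G S ∧ ∀ v ∉ S, ∃ w ∉ S, G.Adj v w

/-- The k₁-connectivity `k₁(G)`, valued in `ℕ∞`; it is `⊤` (infinity) if `G`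
has no k₁-vertex-cut. -/
noncomputable def k1Connectivity {V : Type*} (G : SimpleGraph V) : ℕ∞ :=
  sInf {n : ℕ∞ | ∃ S : Set V, IsK1VertexCut G S ∧ (S.ncard : ℕ∞) = n}

/-- `G` is super connected if every minimum vertex-cut isolates a vertex,
i.e. some vertex of `G − S` has no neighbours in `G − S`. -/
def SuperConnected {V : Type*} (G : SimpleGraph V) : Prop :=
  ∀ S : Set V, IsMinVertexCut G S → ∃ v ∉ S, ∀ w ∉ S, ¬ G.Adj v w

/-!
A k₁-vertex-cut `S` of `G₁` leaves at least two vertices, so `G₁ − S` is disconnected and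
`S × V(G₂)` is a vertex-cut of `G₁ ∘ G₂`; no vertex of `G₁ ∘ G₂ − S × V(G₂)` is isolated, since
`(x, y)` is adjacent to `(x', y)` for any neighbour `x'` of `x` in `G₁ − S`. Conversely, for any
vertex-cut `T` of `G₁ ∘ G₂`, the set of `x` whose whole fibre `{x} × V(G₂)` lies in `T` is a
vertex-cut of `G₁`: otherwise `G₁ ∘ G₂ − T` would be connected, each of its vertices being joined
to a vertex above a neighbour in `G₁`. Hence `|T| ≥ κ(G₁) |V(G₂)|`, a bound attained by the
k₁-vertex-cut `S × V(G₂)` when `|S| = κ(G₁)`, while `k₁ ≥ κ` holds in every graph.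
-/

open SimpleGraph

section Cuts

variable {V : Type*} {G : SimpleGraph V} {S : Set V}

lemma IsVertexCut.compl_nonempty (hS : IsVertexCut G S) : Sᶜ.Nonempty := by
  rcases hS with ⟨hne, -⟩ | ⟨v, hv⟩
  · exact hne
  · exact ⟨v, hv.symm ▸ rfl⟩

lemma IsVertexCut.not_connected (hS : IsVertexCut G S) {a b : V} (ha : a ∉ S) (hb : b ∉ S)
    (hab : a ≠ b) : ¬ (G.induce Sᶜ).Connected := by
  rcases hS with ⟨-, hdisc⟩ | ⟨v, hv⟩
  · exact hdisc
  · have ha' : a ∈ Sᶜ := ha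
    have hb' : b ∈ Sᶜ := hb
    rw [hv] at ha' hb'
    exact absurd (ha'.trans hb'.symm) hab

lemma IsK1VertexCut.not_connected (hS : IsK1VertexCut G S) : ¬ (G.induce Sᶜ).Connected := by
  obtain ⟨v, hv⟩ := hS.1.compl_nonempty
  obtain ⟨w, hw, hvw⟩ := hS.2 v hv
  exact hS.1.not_connected hv hw hvw.ne

lemma connected_induce_compl_of_not_isVertexCut (hS : ¬ IsVertexCut G S) {a : V} (ha : a ∉ S) :
    (G.induce Sᶜ).Connected := by
  by_contra hdisc
  exact hS (Or.inl ⟨⟨a, ha⟩, hdisc⟩)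

lemma exists_ne_notMem_of_not_isVertexCut (hS : ¬ IsVertexCut G S) {a : V} (ha : a ∉ S) :
    ∃ b ∉ S, b ≠ a := by
  by_contra! hb
  exact hS (Or.inr ⟨a, Set.eq_singleton_iff_unique_mem.mpr ⟨ha, hb⟩⟩)

lemma graphConnectivity_le_ncard (hS : IsVertexCut G S) : graphConnectivity G ≤ S.ncard :=
  Nat.sInf_le ⟨S, hS, rfl⟩

lemma le_graphConnectivity {n : ℕ} (hcut : ∃ S, IsVertexCut G S)
    (hle : ∀ S, IsVertexCut G S → n ≤ S.ncard) : n ≤ graphConnectivity G := by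
  obtain ⟨S, hS⟩ := hcut
  exact le_csInf ⟨_, S, hS, rfl⟩ (by rintro _ ⟨T, hT, rfl⟩; exact hle T hT)

lemma k1Connectivity_le_ncard (hS : IsK1VertexCut G S) : k1Connectivity G ≤ S.ncard :=
  sInf_le ⟨S, hS, rfl⟩

lemma graphConnectivity_le_k1Connectivity : (graphConnectivity G : ℕ∞) ≤ k1Connectivity G :=
  le_sInf <| by
    rintro _ ⟨S, hS, rfl⟩
    exact_mod_cast graphConnectivity_le_ncard hS.1

lemma exists_isK1VertexCut_ncard_eq_k1Connectivity (h : k1Connectivity G ≠ ⊤) :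
    ∃ S, IsK1VertexCut G S ∧ (S.ncard : ℕ∞) = k1Connectivity G := by
  have hne : {n : ℕ∞ | ∃ S : Set V, IsK1VertexCut G S ∧ (S.ncard : ℕ∞) = n}.Nonempty := by
    by_contra hempty
    exact h (by rw [k1Connectivity, Set.not_nonempty_iff_eq_empty.mp hempty, sInf_empty])
  exact csInf_mem hne

end Cuts

lemma SimpleGraph.Reachable.map_of_adj_eq_or_adj {α β : Type*} {G : SimpleGraph α}
    {H : SimpleGraph β} (f : α → β) (hf : ∀ a b, G.Adj a b → f a = f b ∨ H.Adj (f a) (f b))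
    {a b : α} (h : G.Reachable a b) : H.Reachable (f a) (f b) := by
  rw [reachable_iff_reflTransGen] at h ⊢
  refine Relation.ReflTransGen.lift' f (fun a b hab => ?_) _ _ h
  rcases hf a b hab with heq | hadj
  · rw [Function.onFun, heq]
  · exact Relation.ReflTransGen.single hadj

section LexProd

variable {V W : Type*} (G₁ : SimpleGraph V) (G₂ : SimpleGraph W)

lemma ncard_preimage_fst (S : Set V) :
    (Prod.fst ⁻¹' S : Set (V × W)).ncard = S.ncard * Nat.card W := by
  rw [← Set.prod_univ, Set.ncard_prod, Set.ncard_univ]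

lemma lexProd_induce_connected {s : Set V} {t : Set (V × W)} (hts : ∀ p ∈ t, p.1 ∈ s)
    (hst : ∀ x ∈ s, ∃ y, (x, y) ∈ t) (hs : (G₁.induce s).Connected) (hs2 : s.Nontrivial) :
    ((lexProd G₁ G₂).induce t).Connected := by
  have : Nontrivial s := hs2.coe_sort
  choose σ hσ using hst
  let f : G₁.induce s →g (lexProd G₁ G₂).induce t :=
    { toFun := fun x => ⟨(x, σ x x.2), hσ x x.2⟩
      map_rel' := Or.inl }
  have to_section : ∀ p : t, ((lexProd G₁ G₂).induce t).Reachable p (f ⟨p.1.1, hts _ p.2⟩) := by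
    intro p
    obtain ⟨c, hc⟩ := hs.preconnected.exists_adj_of_nontrivial ⟨p.1.1, hts _ p.2⟩
    have hpc : ((lexProd G₁ G₂).induce t).Adj p (f c) := Or.inl hc
    exact hpc.reachable.trans (f.map_adj hc.symm).reachable
  obtain ⟨x, hx⟩ := hs2.nonempty
  have : Nonempty t := ⟨⟨_, hσ x hx⟩⟩
  exact Connected.mk fun p q =>
    (to_section p).trans (((hs.preconnected _ _).map f).trans (to_section q).symm)

variable {G₁ G₂}

lemma isVertexCut_lexProd_preimage_fst [Nonempty W] {S : Set V} (hne : Sᶜ.Nonempty)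
    (hdisc : ¬ (G₁.induce Sᶜ).Connected) : IsVertexCut (lexProd G₁ G₂) (Prod.fst ⁻¹' S) := by
  obtain ⟨a, ha⟩ := hne
  refine Or.inl ⟨⟨(a, Classical.arbitrary W), ha⟩, fun hconn => hdisc ?_⟩
  have : Nonempty (Sᶜ : Set V) := ⟨⟨a, ha⟩⟩
  refine Connected.mk fun u v => ?_
  have hr := hconn.preconnected ⟨(u.1, Classical.arbitrary W), u.2⟩
    ⟨(v.1, Classical.arbitrary W), v.2⟩
  refine hr.map_of_adj_eq_or_adj (fun p => (⟨p.1.1, p.2⟩ : (Sᶜ : Set V))) fun p q hpq => ?_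
  rcases hpq with hadj | ⟨heq, -⟩
  · exact Or.inr hadj
  · exact Or.inl (Subtype.ext heq)

lemma IsK1VertexCut.lexProd_preimage_fst [Nonempty W] {S : Set V} (hS : IsK1VertexCut G₁ S) :
    IsK1VertexCut (lexProd G₁ G₂) (Prod.fst ⁻¹' S) := by
  refine ⟨isVertexCut_lexProd_preimage_fst hS.1.compl_nonempty hS.not_connected, ?_⟩
  rintro ⟨x, y⟩ hx
  obtain ⟨x', hx', hadj⟩ := hS.2 x hx
  exact ⟨(x', y), hx', Or.inl hadj⟩

lemma IsVertexCut.of_lexProd {T : Set (V × W)} (hT : IsVertexCut (lexProd G₁ G₂) T) :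
    IsVertexCut G₁ {x | ∀ y, (x, y) ∈ T} := by
  set A : Set V := {x | ∀ y, (x, y) ∈ T}
  obtain ⟨⟨a, y₀⟩, haT⟩ := hT.compl_nonempty
  have haA : a ∉ A := fun h => haT (h y₀)
  by_contra hA
  have hfibre : ∀ x ∈ Aᶜ, ∃ y, (x, y) ∈ Tᶜ := fun x hx => by
    by_contra! hx'
    exact hx fun y => not_not.mp (hx' y)
  obtain ⟨b, hbA, hba⟩ := exists_ne_notMem_of_not_isVertexCut hA haA
  obtain ⟨y₁, hbT⟩ := hfibre b hbA
  refine hT.not_connected haT hbT (fun h => hba (congrArg Prod.fst h).symm) ?_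
  exact lexProd_induce_connected G₁ G₂ (s := Aᶜ) (fun p hp hpA => hp (hpA p.2)) hfibre
    (connected_induce_compl_of_not_isVertexCut hA haA) ⟨a, haA, b, hbA, hba.symm⟩

lemma graphConnectivity_mul_card_le_ncard [Finite V] [Finite W] {T : Set (V × W)}
    (hT : IsVertexCut (lexProd G₁ G₂) T) : graphConnectivity G₁ * Nat.card W ≤ T.ncard :=
  calc graphConnectivity G₁ * Nat.card W
      ≤ {x | ∀ y, (x, y) ∈ T}.ncard * Nat.card W :=
        Nat.mul_le_mul_right _ (graphConnectivity_le_ncard hT.of_lexProd)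
    _ = (Prod.fst ⁻¹' {x | ∀ y, (x, y) ∈ T}).ncard := (ncard_preimage_fst _).symm
    _ ≤ T.ncard := Set.ncard_le_ncard (fun p hp => hp p.2) T.toFinite

end LexProd

theorem k1_lexProd_of_k1_eq_kappa_general {V W : Type*} [Fintype V] [Fintype W] [Nonempty W]
    (G₁ : SimpleGraph V) (G₂ : SimpleGraph W)
    (h : k1Connectivity G₁ = (graphConnectivity G₁ : ℕ∞)) :
    k1Connectivity (lexProd G₁ G₂) = (graphConnectivity (lexProd G₁ G₂) : ℕ∞) := by
  obtain ⟨S, hS, hSk⟩ := exists_isK1VertexCut_ncard_eq_k1Connectivity (h ▸ ENat.natCast_ne_top _)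
  have hSκ : S.ncard = graphConnectivity G₁ := by exact_mod_cast hSk.trans h
  have hcut : IsK1VertexCut (lexProd G₁ G₂) (Prod.fst ⁻¹' S) := hS.lexProd_preimage_fst
  refine le_antisymm ?_ graphConnectivity_le_k1Connectivity
  calc k1Connectivity (lexProd G₁ G₂) ≤ (Prod.fst ⁻¹' S).ncard := k1Connectivity_le_ncard hcut
    _ = (graphConnectivity G₁ * Nat.card W : ℕ) := by rw [ncard_preimage_fst, hSκ]
    _ ≤ graphConnectivity (lexProd G₁ G₂) := by
      exact_mod_cast le_graphConnectivity ⟨_, hcut.1⟩ fun T hT =>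
        graphConnectivity_mul_card_le_ncard hT

/-- If k₁(G₁) = κ(G₁) then k₁(G₁∘G₂) = κ(G₁∘G₂). -/
theorem k1_lexProd_of_k1_eq_kappa {V W : Type*} [Fintype V] [Fintype W] [Nonempty W]
    (G₁ : SimpleGraph V) (G₂ : SimpleGraph W)
    (hconn : G₁.Connected) (hnc : G₁ ≠ ⊤)
    (h : k1Connectivity G₁ = (graphConnectivity G₁ : ℕ∞)) :
    k1Connectivity (lexProd G₁ G₂) = (graphConnectivity (lexProd G₁ G₂) : ℕ∞) :=
  k1_lexProd_of_k1_eq_kappa_general G₁ G₂ h
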